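/- arXiv:2208.13611 — 7 statements merged into one kernel-verified Lean document; each statement's English description precedes it below -/
import Mathlib

section
/- Let K be a field and n ≥ 1. Let (E, F, G) be a transverse triple of complete flags in K^n. If φ : K^n → K^n is a linear automorphism such that φ(E(a)) = E(a), φ(F(a)) = F(a) and φ(G(a)) = G(a) for all 0 ≤ a ≤ n, then φ is a scalar map: there exists a nonzero c ∈ K with φ(x) = c • x for all x ∈ K^n. (Equivalently, the stabilizer in PGL(n,K) of a transverse triple of complete flags is trivial.) -/
/-- A complete flag in `K^n`: a map assigning to each `a ∈ {0,…,n}` an `a`-dimensional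
subspace, nested increasingly. -/
def IsCompleteFlag (K : Type*) [Field K] (n : ℕ) (E : ℕ → Submodule K (Fin n → K)) : Prop :=
  (∀ a, a ≤ n → Module.finrank K (E a) = a) ∧
  (∀ a b, a ≤ b → b ≤ n → E a ≤ E b)

/-- The stabilizer of a transverse triple of complete flags consists only of scalar maps. -/
theorem stabilizer_of_transverse_flag_triple_is_scalar
    {K : Type*} [Field K] {n : ℕ} (hn : 1 ≤ n)
    (E F G : ℕ → Submodule K (Fin n → K))
    (hE : IsCompleteFlag K n E) (hF : IsCompleteFlag K n F) (hG : IsCompleteFlag K n G)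
    (htrans : ∀ a b c : ℕ, a + b + c = n → E a ⊔ F b ⊔ G c = ⊤)
    (φ : (Fin n → K) ≃ₗ[K] (Fin n → K))
    (hφE : ∀ a, a ≤ n → Submodule.map φ.toLinearMap (E a) = E a)
    (hφF : ∀ a, a ≤ n → Submodule.map φ.toLinearMap (F a) = F a)
    (hφG : ∀ a, a ≤ n → Submodule.map φ.toLinearMap (G a) = G a) :
    ∃ c : K, c ≠ 0 ∧ ∀ x : Fin n → K, φ x = c • x := by
  classical
  have hdim : Module.finrank K (Fin n → K) = n := Module.finrank_fin_fun K
  obtain ⟨hEd, hEm⟩ := hE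
  obtain ⟨hFd, hFm⟩ := hF
  obtain ⟨hGd, hGm⟩ := hG
  have hG0 : G 0 = ⊥ := Submodule.finrank_eq_zero.mp (hGd 0 n.zero_le)
  have htopr : Module.finrank K (⊤ : Submodule K (Fin n → K)) = n := by
    rw [finrank_top]; exact hdim
  have hsup : ∀ a b : ℕ, a + b = n → E a ⊔ F b = ⊤ := by
    intro a b hab
    have h := htrans a b 0 (by omega)
    rwa [hG0, sup_bot_eq] at h
  have hinf : ∀ a b : ℕ, a + b = n → E a ⊓ F b = ⊥ := by
    intro a b hab
    have h := Submodule.finrank_sup_add_finrank_inf_eq (E a) (F b)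
    rw [hsup a b hab, htopr, hEd a (by omega), hFd b (by omega)] at h
    exact Submodule.finrank_eq_zero.mp (by omega)
  have hLrank : ∀ i : Fin n, Module.finrank K ↥(E ((i : ℕ) + 1) ⊓ F (n - (i : ℕ))) = 1 := by
    intro i
    have hi : (i : ℕ) < n := i.isLt
    have hsupL : E ((i : ℕ) + 1) ⊔ F (n - (i : ℕ)) = ⊤ := by
      refine le_antisymm le_top ?_
      rw [← hsup ((i : ℕ) + 1) (n - ((i : ℕ) + 1)) (by omega)]
      exact sup_le_sup le_rfl (hFm _ _ (by omega) (by omega))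
    have h := Submodule.finrank_sup_add_finrank_inf_eq (E ((i : ℕ) + 1)) (F (n - (i : ℕ)))
    rw [hsupL, htopr, hEd _ (by omega), hFd _ (by omega)] at h
    omega
  -- any 1-dimensional submodule is a span of a nonzero vector
  have hone : ∀ W : Submodule K (Fin n → K), Module.finrank K W = 1 →
      ∃ v : Fin n → K, v ≠ 0 ∧ W = Submodule.span K {v} := by
    intro W hW
    obtain ⟨⟨v, hvW⟩, hv0, hvall⟩ := finrank_eq_one_iff'.mp hW
    refine ⟨v, fun h => hv0 (Subtype.ext h), le_antisymm ?_ ?_⟩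
    · intro w hw
      obtain ⟨cw, hcw⟩ := hvall ⟨w, hw⟩
      have hcw' : cw • v = w := congrArg Subtype.val hcw
      rw [← hcw']
      exact Submodule.smul_mem _ _ (Submodule.mem_span_singleton_self v)
    · rw [Submodule.span_le, Set.singleton_subset_iff]; exact hvW
  choose e he0 hespan using fun i => hone _ (hLrank i)
  have heL : ∀ i : Fin n, e i ∈ (E ((i : ℕ) + 1) ⊓ F (n - (i : ℕ))) := fun i => (hespan i) ▸ Submodule.mem_span_singleton_self _
  -- the lines build up the flag E
  have hstep : ∀ i : Fin n, E ((i : ℕ) + 1) = E (i : ℕ) ⊔ (E ((i : ℕ) + 1) ⊓ F (n - (i : ℕ))) := by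
    intro i
    have hi : (i : ℕ) < n := i.isLt
    have hle : E (i : ℕ) ⊔ (E ((i : ℕ) + 1) ⊓ F (n - (i : ℕ))) ≤ E ((i : ℕ) + 1) :=
      sup_le (hEm _ _ (by omega) (by omega)) inf_le_left
    have hinf2 : E (i : ℕ) ⊓ (E ((i : ℕ) + 1) ⊓ F (n - (i : ℕ))) = ⊥ := by
      refine le_antisymm ?_ bot_le
      calc E (i : ℕ) ⊓ (E ((i : ℕ) + 1) ⊓ F (n - (i : ℕ))) ≤ E (i : ℕ) ⊓ F (n - (i : ℕ)) := inf_le_inf_left _ inf_le_right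
        _ = ⊥ := hinf _ _ (by omega)
    have h := Submodule.finrank_sup_add_finrank_inf_eq (E (i : ℕ)) ((E ((i : ℕ) + 1) ⊓ F (n - (i : ℕ))))
    rw [hinf2, finrank_bot, hLrank i, hEd _ (by omega)] at h
    refine (Submodule.eq_of_le_of_finrank_le hle ?_).symm
    rw [hEd _ (by omega)]
    omega
  have hspan : ∀ k, k ≤ n → E k ≤ ⨆ i : Fin n, Submodule.span K {e i} := by
    intro k
    induction k with
    | zero =>
      intro _
      rw [Submodule.finrank_eq_zero.mp (hEd 0 n.zero_le)]
      exact bot_le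
    | succ k ih =>
      intro hk
      have hk' : k < n := hk
      have hs := hstep ⟨k, hk'⟩
      simp only [Fin.val_mk] at hs
      rw [hs]
      refine sup_le (ih (by omega)) ?_
      rw [hespan ⟨k, hk'⟩]
      exact le_iSup (fun i => Submodule.span K {e i}) ⟨k, hk'⟩
  have hEn : E n = ⊤ := Submodule.eq_top_of_finrank_eq (by rw [hEd n le_rfl, hdim])
  have htople : ⊤ ≤ Submodule.span K (Set.range e) := by
    rw [Submodule.span_range_eq_iSup]
    exact hEn ▸ hspan n le_rfl
  have hcard : Fintype.card (Fin n) = Module.finrank K (Fin n → K) := by simp [hdim]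
  set B := basisOfTopLeSpanOfCardEqFinrank e htople hcard with hBdef
  have hB : ⇑B = e := coe_basisOfTopLeSpanOfCardEqFinrank e htople hcard
  -- eigenvalues on each line
  have hcex : ∀ i : Fin n, ∃ c : K, φ (e i) = c • e i := by
    intro i
    have hi : (i : ℕ) < n := i.isLt
    have h1 : φ (e i) ∈ (E ((i : ℕ) + 1) ⊓ F (n - (i : ℕ))) := by
      refine Submodule.mem_inf.mpr ⟨?_, ?_⟩
      · rw [← hφE ((i : ℕ) + 1) (by omega)]
        exact Submodule.mem_map_of_mem (Submodule.mem_inf.mp (heL i)).1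
      · rw [← hφF (n - (i : ℕ)) (by omega)]
        exact Submodule.mem_map_of_mem (Submodule.mem_inf.mp (heL i)).2
    rw [hespan i, Submodule.mem_span_singleton] at h1
    obtain ⟨ci, hci⟩ := h1
    exact ⟨ci, hci.symm⟩
  choose c hcv using hcex
  -- a generator of G 1
  obtain ⟨v, hv0, hvspan⟩ := hone (G 1) (hGd 1 hn)
  have hφv : φ v ∈ G 1 := by
    rw [← hφG 1 hn]
    exact Submodule.mem_map_of_mem (hvspan ▸ Submodule.mem_span_singleton_self v)
  rw [hvspan, Submodule.mem_span_singleton] at hφv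
  obtain ⟨lam, hlam⟩ := hφv
  have hlam0 : lam ≠ 0 := by
    intro h
    apply hv0
    have hz : φ v = 0 := by rw [← hlam, h, zero_smul]
    simpa using hz
  set t : Fin n → K := fun i => B.repr v i with ht
  have hvsum : ∑ i, t i • e i = v := by
    rw [← hB]
    exact B.sum_repr v
  -- all coordinates of v are nonzero
  have ht0 : ∀ i, t i ≠ 0 := by
    intro i hti
    have hi : (i : ℕ) < n := i.isLt
    have hmem : v ∈ E (i : ℕ) ⊔ F (n - 1 - (i : ℕ)) := by
      rw [← hvsum]
      refine Submodule.sum_mem _ fun j _ => ?_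
      rcases lt_trichotomy (j : ℕ) (i : ℕ) with hj | hj | hj
      · exact Submodule.mem_sup_left (Submodule.smul_mem _ _
          (hEm ((j : ℕ) + 1) (i : ℕ) (by omega) (by omega) (Submodule.mem_inf.mp (heL j)).1))
      · have hj' : j = i := Fin.ext hj
        rw [hj', hti, zero_smul]
        exact Submodule.zero_mem _
      · refine Submodule.mem_sup_right (Submodule.smul_mem _ _
          (hFm (n - (j : ℕ)) (n - 1 - (i : ℕ)) (by omega) (by omega)
            (Submodule.mem_inf.mp (heL j)).2))
    have htop2 := htrans (i : ℕ) (n - 1 - (i : ℕ)) 1 (by omega)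
    have hle2 : E (i : ℕ) ⊔ F (n - 1 - (i : ℕ)) ⊔ G 1 ≤ E (i : ℕ) ⊔ F (n - 1 - (i : ℕ)) := by
      refine sup_le le_rfl ?_
      rw [hvspan, Submodule.span_le, Set.singleton_subset_iff]
      exact hmem
    have heq : E (i : ℕ) ⊔ F (n - 1 - (i : ℕ)) = ⊤ := top_le_iff.mp (htop2 ▸ hle2)
    have h1 : Module.finrank K ↥(E (i : ℕ) ⊔ F (n - 1 - (i : ℕ))) ≤ (i : ℕ) + (n - 1 - (i : ℕ)) := by
      calc Module.finrank K ↥(E (i : ℕ) ⊔ F (n - 1 - (i : ℕ)))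
          ≤ Module.finrank K (E (i : ℕ)) + Module.finrank K (F (n - 1 - (i : ℕ))) :=
            Submodule.finrank_add_le_finrank_add_finrank _ _
        _ = (i : ℕ) + (n - 1 - (i : ℕ)) := by rw [hEd _ (by omega), hFd _ (by omega)]
    rw [heq, htopr] at h1
    omega
  -- all eigenvalues equal lam
  have hceq : ∀ i, c i = lam := by
    intro i
    have h1 : φ v = ∑ j, (t j * c j) • e j := by
      rw [← hvsum, map_sum]
      simp only [map_smul, hcv, smul_smul]
    have h2 : φ v = ∑ j, (lam * t j) • e j := by
      rw [← hlam, ← hvsum, Finset.smul_sum]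
      simp [smul_smul]
    have e1 : ⇑(B.repr (φ v)) = fun j => t j * c j := by
      rw [h1, ← hB]
      exact B.repr_sum_self _
    have e2 : ⇑(B.repr (φ v)) = fun j => lam * t j := by
      rw [h2, ← hB]
      exact B.repr_sum_self _
    have h3 : t i * c i = lam * t i := by
      rw [← congrFun e1 i, congrFun e2 i]
    have h4 : t i * c i = t i * lam := by rw [h3, mul_comm]
    exact mul_left_cancel₀ (ht0 i) h4
  refine ⟨lam, hlam0, ?_⟩
  have hlin : φ.toLinearMap = lam • LinearMap.id := by
    apply B.ext
    intro i
    simp [hB, hcv i, hceq i]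
  intro x
  have hx := LinearMap.ext_iff.mp hlin x
  simpa using hx
end

section
/- Let K be a field and n ≥ 1. Let (E, F, G) be a transverse triple of complete flags in K^n. Then there exists a basis (e_1, …, e_n) of K^n such that for every 0 ≤ a ≤ n one has E(a) = span(e_1, …, e_a) and F(a) = span(e_{n−a+1}, …, e_n), and moreover G(1) = span(e_1 + e_2 + … + e_n). -/
/-!
Let `v` span `G(1)`. Transversality with `c = 0` gives `E(a) ⊔ F(n - a) = K^n`, so
`v = x_a + y_a` with `x_a ∈ E(a)`, `y_a ∈ F(n - a)`, and `x_0 = 0`, `x_n = v`. The differences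
`e_i = x_{i+1} - x_i` telescope to `v` and lie in `E(i + 1) ⊓ F(n - i)`. Transversality with
`c = 1` says that `v ∉ E(i) ⊔ F(n - 1 - i)`, a sum of dimension at most `n - 1`; this forces
`e_i ∉ E(i)` and `e_i ∉ F(n - 1 - i)`, so `e` is adapted to both flags.
-/

open Submodule Module

section

variable {K : Type*} [Field K] {n : ℕ}

namespace IsCompleteFlag

variable {E : ℕ → Submodule K (Fin n → K)}

theorem zero_eq_bot (hE : IsCompleteFlag K n E) : E 0 = ⊥ :=
  finrank_eq_zero.mp (hE.1 0 n.zero_le)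

theorem self_eq_top (hE : IsCompleteFlag K n E) : E n = ⊤ :=
  eq_top_of_finrank_eq (by rw [hE.1 n le_rfl, finrank_fin_fun])

theorem succ_eq_sup_span_singleton (hE : IsCompleteFlag K n E) {a : ℕ} (ha : a < n)
    {w : Fin n → K} (hw : w ∈ E (a + 1)) (hw' : w ∉ E a) : E (a + 1) = E a ⊔ K ∙ w := by
  have hlt : E a < E a ⊔ K ∙ w := left_lt_sup.mpr (by rwa [span_singleton_le_iff_mem])
  refine (eq_of_le_of_finrank_le ?_ ?_).symm
  · exact sup_le (hE.2 a (a + 1) a.le_succ ha) ((span_singleton_le_iff_mem _ _).mpr hw)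
  · rw [hE.1 (a + 1) ha]
    exact (hE.1 a ha.le).symm.trans_lt (finrank_lt_finrank_of_lt hlt)

theorem eq_span_image_of_mem_of_notMem (hE : IsCompleteFlag K n E) {e : Fin n → Fin n → K}
    (he : ∀ i : Fin n, e i ∈ E (i + 1)) (he' : ∀ i : Fin n, e i ∉ E i) {a : ℕ} (ha : a ≤ n) :
    E a = span K (e '' {i | (i : ℕ) < a}) := by
  induction a with
  | zero => simp [hE.zero_eq_bot]
  | succ a ih =>
    have hsplit : {i : Fin n | (i : ℕ) < a + 1} = {i : Fin n | (i : ℕ) < a} ∪ {⟨a, ha⟩} := by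
      ext i
      simp only [Set.mem_ofPred_eq, Set.mem_union, Set.mem_singleton_iff, Fin.ext_iff]
      omega
    rw [hE.succ_eq_sup_span_singleton ha (he ⟨a, ha⟩) (he' ⟨a, ha⟩), ih (by omega), hsplit,
      Set.image_union, Set.image_singleton, span_union]

theorem eq_span_image_of_mem_of_notMem_rev (hE : IsCompleteFlag K n E) {e : Fin n → Fin n → K}
    (he : ∀ i : Fin n, e i ∈ E (n - i)) (he' : ∀ i : Fin n, e i ∉ E (n - (i + 1))) {a : ℕ}
    (ha : a ≤ n) : E a = span K (e '' {i | n - a ≤ (i : ℕ)}) := by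
  have hrev (i : Fin n) : n - (i.rev : ℕ) = i + 1 := by rw [Fin.val_rev]; omega
  have hrev' (i : Fin n) : n - ((i.rev : ℕ) + 1) = i := by rw [Fin.val_rev]; omega
  rw [hE.eq_span_image_of_mem_of_notMem (e := e ∘ Fin.rev)
    (fun i => hrev i ▸ he i.rev) (fun i => hrev' i ▸ he' i.rev) ha, Set.image_comp]
  congr 2
  ext i
  simp only [Set.mem_image, Set.mem_ofPred_eq]
  refine ⟨fun ⟨j, hj, hji⟩ => ?_, fun hi => ⟨i.rev, ?_, Fin.rev_rev i⟩⟩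
  · rw [← hji, Fin.val_rev]
    omega
  · rw [Fin.val_rev]
    omega

theorem span_range_eq_top_of_mem_of_notMem (hE : IsCompleteFlag K n E) {e : Fin n → Fin n → K}
    (he : ∀ i : Fin n, e i ∈ E (i + 1)) (he' : ∀ i : Fin n, e i ∉ E i) :
    span K (Set.range e) = ⊤ := by
  rw [← hE.self_eq_top, hE.eq_span_image_of_mem_of_notMem he he' le_rfl, ← Set.image_univ]
  simp

theorem linearIndependent_of_mem_of_notMem (hE : IsCompleteFlag K n E) {e : Fin n → Fin n → K}
    (he : ∀ i : Fin n, e i ∈ E (i + 1)) (he' : ∀ i : Fin n, e i ∉ E i) : LinearIndependent K e :=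
  linearIndependent_of_top_le_span_of_card_eq_finrank
    (hE.span_range_eq_top_of_mem_of_notMem he he').ge (by simp)

end IsCompleteFlag

theorem notMem_sup_of_sup_span_singleton_eq_top {V : Type*} [AddCommGroup V] [Module K V]
    [FiniteDimensional K V] {p q : Submodule K V} (hpq : finrank K p + finrank K q < finrank K V)
    {v : V} (h : p ⊔ q ⊔ K ∙ v = ⊤) : v ∉ p ⊔ q := by
  intro hv
  rw [sup_eq_left.mpr ((span_singleton_le_iff_mem _ _).mpr hv)] at h
  have := finrank_add_le_finrank_add_finrank p q
  rw [h, finrank_top] at this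
  omega

theorem exists_sum_eq_of_mem_sup {E F : ℕ → Submodule K (Fin n → K)}
    (hE : IsCompleteFlag K n E) (hF : IsCompleteFlag K n F) {v : Fin n → K}
    (hv : ∀ a ≤ n, v ∈ E a ⊔ F (n - a)) (hv' : ∀ a < n, v ∉ E a ⊔ F (n - (a + 1))) :
    ∃ e : Fin n → Fin n → K,
      ((∀ i : Fin n, e i ∈ E (i + 1)) ∧ ∀ i : Fin n, e i ∉ E i) ∧
      ((∀ i : Fin n, e i ∈ F (n - i)) ∧ ∀ i : Fin n, e i ∉ F (n - (i + 1))) ∧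
      ∑ i, e i = v := by
  have hsplit : ∀ a ≤ n, ∃ x ∈ E a, v - x ∈ F (n - a) := fun a ha => by
    obtain ⟨y, hy, z, hz, rfl⟩ := mem_sup.mp (hv a ha)
    exact ⟨y, hy, by simpa using hz⟩
  choose! x hxE hxF using hsplit
  have hx0 : x 0 = 0 := by simpa [hE.zero_eq_bot] using hxE 0 n.zero_le
  have hxn : x n = v := by simpa [hF.zero_eq_bot, sub_eq_zero, eq_comm] using hxF n le_rfl
  refine ⟨fun i => x (i + 1) - x i, ⟨fun i => ?_, fun i hi => ?_⟩, ⟨fun i => ?_, fun i hi => ?_⟩, ?_⟩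
  · exact sub_mem (hxE _ i.isLt) (hE.2 _ _ i.val.le_succ i.isLt (hxE _ i.isLt.le))
  · refine hv' i i.isLt ?_
    rw [show v = (x i + (x (i + 1) - x i)) + (v - x (i + 1)) by abel]
    exact add_mem (mem_sup_left (add_mem (hxE _ i.isLt.le) hi)) (mem_sup_right (hxF _ i.isLt))
  · show x (i + 1) - x i ∈ F (n - i)
    rw [← sub_sub_sub_cancel_left (x i) (x (i + 1)) v]
    exact sub_mem (hxF _ i.isLt.le) (hF.2 _ _ (by omega) (by omega) (hxF _ i.isLt))
  · refine hv' i i.isLt ?_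
    rw [show v = x i + ((x (i + 1) - x i) + (v - x (i + 1))) by abel]
    exact add_mem (mem_sup_left (hxE _ i.isLt.le)) (mem_sup_right (add_mem hi (hxF _ i.isLt)))
  · rw [Fin.sum_univ_eq_sum_range (fun k => x (k + 1) - x k), Finset.sum_range_sub, hxn, hx0,
      sub_zero]

end

/-- For a transverse triple of complete flags `(E,F,G)` there is a basis `e` of `K^n`
adapted to `E` (ascending) and `F` (descending) such that `G(1)` is spanned by the sum
of the basis vectors. -/
theorem exists_basis_adapted_to_transverse_flag_triple
    {K : Type*} [Field K] {n : ℕ} (hn : 1 ≤ n)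
    (E F G : ℕ → Submodule K (Fin n → K))
    (hE : IsCompleteFlag K n E) (hF : IsCompleteFlag K n F) (hG : IsCompleteFlag K n G)
    (htrans : ∀ a b c : ℕ, a + b + c = n → E a ⊔ F b ⊔ G c = ⊤) :
    ∃ e : Fin n → (Fin n → K),
      LinearIndependent K e ∧
      Submodule.span K (Set.range e) = ⊤ ∧
      (∀ a, a ≤ n →
        E a = Submodule.span K (e '' {i : Fin n | (i : ℕ) < a}) ∧
        F a = Submodule.span K (e '' {i : Fin n | n - a ≤ (i : ℕ)})) ∧
      G 1 = Submodule.span K ({∑ i, e i} : Set (Fin n → K)) := by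
  have hG1 : finrank K (G 1) = 1 := hG.1 1 hn
  obtain ⟨v, hvG, hv0⟩ := (G 1).ne_bot_iff.mp fun h => by
    rw [h, finrank_bot] at hG1
    exact zero_ne_one hG1
  have hGv : G 1 = K ∙ v := eq_span_singleton_of_mem_of_finrank_eq_one hG1 hvG hv0
  have hv (a : ℕ) (ha : a ≤ n) : v ∈ E a ⊔ F (n - a) := by
    have hEF := htrans a (n - a) 0 (by omega)
    rw [hG.zero_eq_bot, sup_bot_eq] at hEF
    exact hEF ▸ mem_top
  have hv' (a : ℕ) (ha : a < n) : v ∉ E a ⊔ F (n - (a + 1)) :=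
    notMem_sup_of_sup_span_singleton_eq_top
      (by rw [hE.1 a ha.le, hF.1 _ (by omega), finrank_fin_fun]; omega)
      (hGv ▸ htrans a (n - (a + 1)) 1 (by omega))
  obtain ⟨e, ⟨heE, heE'⟩, ⟨heF, heF'⟩, hsum⟩ := exists_sum_eq_of_mem_sup hE hF hv hv'
  exact ⟨e, hE.linearIndependent_of_mem_of_notMem heE heE',
    hE.span_range_eq_top_of_mem_of_notMem heE heE', fun a ha =>
      ⟨hE.eq_span_image_of_mem_of_notMem heE heE' ha,
        hF.eq_span_image_of_mem_of_notMem_rev heF heF' ha⟩, hsum ▸ hGv⟩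
end

section
/- Let K be a field and n ≥ 1, and let (E, F, G) be a transverse triple of complete flags in K^n. Suppose (e_1, …, e_n) and (e'_1, …, e'_n) are two bases of K^n such that for every 0 ≤ a ≤ n: E(a) = span(e_1, …, e_a) = span(e'_1, …, e'_a), F(a) = span(e_{n−a+1}, …, e_n) = span(e'_{n−a+1}, …, e'_n), and G(1) = span(e_1 + … + e_n) = span(e'_1 + … + e'_n). Then there exists a nonzero scalar c ∈ K with e'_i = c • e_i for all i = 1, …, n; i.e., a basis adapted to a transverse triple of flags is unique up to rescaling all basis vectors by a common nonzero scalar. -/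
open Submodule

theorem LinearIndependent.span_image_inter {ι R M : Type*} [Semiring R] [AddCommMonoid M]
    [Module R M] {v : ι → M} (hv : LinearIndependent R v) (s t : Set ι) :
    span R (v '' (s ∩ t)) = span R (v '' s) ⊓ span R (v '' t) := by
  simp only [Finsupp.span_image_eq_map_linearCombination, Finsupp.supported_inter]
  exact map_inf _ hv

theorem LinearIndependent.span_image_lt_succ_inf_span_image_le {R M : Type*} [Semiring R]
    [AddCommMonoid M] [Module R M] {n : ℕ} {v : Fin n → M} (hv : LinearIndependent R v)
    (i : Fin n) :
    span R (v '' {j | (j : ℕ) < i + 1}) ⊓ span R (v '' {j | n - (n - i) ≤ (j : ℕ)}) = R ∙ v i := by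
  rw [← hv.span_image_inter, ← Set.image_singleton]
  congr
  ext j
  simp only [Set.mem_inter_iff, Set.mem_ofPred_eq, Set.mem_singleton_iff, Fin.ext_iff]
  omega

theorem LinearIndependent.exists_smul_eq_of_mem_span_singleton {ι R M : Type*} [Fintype ι]
    [Semiring R] [AddCommMonoid M] [Module R M] {e e' : ι → M} (he : LinearIndependent R e)
    (hline : ∀ i, e' i ∈ R ∙ e i) (hsum : ∑ i, e' i ∈ R ∙ ∑ i, e i) :
    ∃ c : R, ∀ i, e' i = c • e i := by
  choose a ha using fun i => mem_span_singleton.mp (hline i)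
  obtain ⟨c, hc⟩ := mem_span_singleton.mp hsum
  have hcoeff : ∑ i, a i • e i = ∑ i, c • e i := by
    rw [← Finset.smul_sum, hc]
    exact Finset.sum_congr rfl fun i _ => ha i
  refine ⟨c, fun i => ?_⟩
  rw [← ha i, Fintype.linearIndependent_iffₛ.mp he a (fun _ => c) hcoeff i]

theorem adapted_basis_unique_up_to_common_scalar_general
    {K : Type*} [Field K] {n : ℕ} (hn : 1 ≤ n)
    (E F G : ℕ → Submodule K (Fin n → K))
    (e e' : Fin n → (Fin n → K))
    (he : LinearIndependent K e)
    (he' : LinearIndependent K e')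
    (hEe : ∀ a, a ≤ n → E a = Submodule.span K (e '' {i : Fin n | (i : ℕ) < a}))
    (hEe' : ∀ a, a ≤ n → E a = Submodule.span K (e' '' {i : Fin n | (i : ℕ) < a}))
    (hFe : ∀ a, a ≤ n → F a = Submodule.span K (e '' {i : Fin n | n - a ≤ (i : ℕ)}))
    (hFe' : ∀ a, a ≤ n → F a = Submodule.span K (e' '' {i : Fin n | n - a ≤ (i : ℕ)}))
    (hGe : G 1 = Submodule.span K ({∑ i, e i} : Set (Fin n → K)))
    (hGe' : G 1 = Submodule.span K ({∑ i, e' i} : Set (Fin n → K))) :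
    ∃ c : K, c ≠ 0 ∧ ∀ i : Fin n, e' i = c • e i := by
  have hline : ∀ i, e' i ∈ K ∙ e i := fun i => by
    rw [← he.span_image_lt_succ_inf_span_image_le i, ← hEe _ i.isLt, ← hFe _ (n.sub_le i),
      hEe' _ i.isLt, hFe' _ (n.sub_le i)]
    exact ⟨subset_span ⟨i, by simp, rfl⟩, subset_span ⟨i, by simp, rfl⟩⟩
  have hsum : ∑ i, e' i ∈ K ∙ ∑ i, e i := by
    rw [← hGe, hGe']
    exact mem_span_singleton_self _
  obtain ⟨c, hc⟩ := he.exists_smul_eq_of_mem_span_singleton hline hsum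
  refine ⟨c, ?_, hc⟩
  rintro rfl
  exact he'.ne_zero ⟨0, hn⟩ (by simpa using hc ⟨0, hn⟩)

/-- A basis adapted to a transverse triple of complete flags is unique up to rescaling
all basis vectors by a common nonzero scalar. -/
theorem adapted_basis_unique_up_to_common_scalar
    {K : Type*} [Field K] {n : ℕ} (hn : 1 ≤ n)
    (E F G : ℕ → Submodule K (Fin n → K))
    (hE : IsCompleteFlag K n E) (hF : IsCompleteFlag K n F) (hG : IsCompleteFlag K n G)
    (htrans : ∀ a b c : ℕ, a + b + c = n → E a ⊔ F b ⊔ G c = ⊤)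
    (e e' : Fin n → (Fin n → K))
    (he : LinearIndependent K e) (hespan : Submodule.span K (Set.range e) = ⊤)
    (he' : LinearIndependent K e') (he'span : Submodule.span K (Set.range e') = ⊤)
    (hEe : ∀ a, a ≤ n → E a = Submodule.span K (e '' {i : Fin n | (i : ℕ) < a}))
    (hEe' : ∀ a, a ≤ n → E a = Submodule.span K (e' '' {i : Fin n | (i : ℕ) < a}))
    (hFe : ∀ a, a ≤ n → F a = Submodule.span K (e '' {i : Fin n | n - a ≤ (i : ℕ)}))
    (hFe' : ∀ a, a ≤ n → F a = Submodule.span K (e' '' {i : Fin n | n - a ≤ (i : ℕ)}))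
    (hGe : G 1 = Submodule.span K ({∑ i, e i} : Set (Fin n → K)))
    (hGe' : G 1 = Submodule.span K ({∑ i, e' i} : Set (Fin n → K))) :
    ∃ c : K, c ≠ 0 ∧ ∀ i : Fin n, e' i = c • e i :=
  adapted_basis_unique_up_to_common_scalar_general hn E F G e e' he he' hEe hEe' hFe hFe' hGe hGe'
end

section
/- Let K be a linearly ordered field and let A and B be totally positive upper triangular n×n matrices over K. Then the product A·B is again totally positive upper triangular, i.e., A·B is upper triangular and every minor of A·B on rows i_1 < … < i_p and columns j_1 < … < j_p with i_k ≤ j_k for all k is strictly positive. -/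
/-!
By Cauchy–Binet, the minor of `A * B` on rows `r` and columns `c` is the sum over strictly
increasing `s` of `det A[r, s] * det B[s, c]`. A minor of an upper triangular matrix on
increasing rows `r` and columns `s` vanishes as soon as some `s k < r k`, since it then has a
zero block too large for any permutation to avoid; so all minors of a totally positive upper
triangular matrix are nonnegative, every term of the sum is nonnegative, and the term `s = r`
is `det A[r, r] * det B[r, c] > 0`.
-/

open Finset Function Equiv

theorem sum_injective_eq_sum_strictMono_sum_perm {ι M : Type*} [Fintype ι] [LinearOrder ι]
    [AddCommMonoid M] {p : ℕ} (F : (Fin p → ι) → M) :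
    ∑ f : Fin p → ι with Injective f, F f =
      ∑ s : Fin p → ι with StrictMono s, ∑ σ : Perm (Fin p), F (s ∘ σ) := by
  rw [← sum_product']
  refine sum_bij' (fun f _ => (f ∘ Tuple.sort f, (Tuple.sort f)⁻¹)) (fun x _ => x.1 ∘ x.2)
    ?_ ?_ ?_ ?_ ?_
  · intro f hf
    simp only [mem_product, mem_filter_univ, mem_univ, and_true] at hf ⊢
    exact (Tuple.monotone_sort f).strictMono_of_injective (hf.comp (Equiv.injective _))
  · rintro ⟨s, σ⟩ hs
    simp only [mem_product, mem_filter_univ, mem_univ, and_true] at hs ⊢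
    exact hs.injective.comp σ.injective
  · intro f _
    ext i
    simp
  · rintro ⟨s, σ⟩ hs
    simp only [mem_product, mem_filter_univ, mem_univ, and_true] at hs
    have hsort : σ⁻¹ = Tuple.sort (s ∘ σ) :=
      Tuple.eq_sort_iff.2 ⟨by simpa [comp_assoc] using hs.monotone,
        fun i j hij heq => absurd (hs.injective (by simpa using heq)) hij.ne⟩
    simp [← hsort, comp_assoc]
  · intro f _
    simp [comp_assoc]

namespace Matrix

variable {R : Type*} [CommRing R]

theorem det_mul_eq_sum_prod_mul_det_submatrix {κ ι : Type*} [Fintype κ] [DecidableEq κ]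
    [Fintype ι] (M : Matrix κ ι R) (N : Matrix ι κ R) :
    (M * N).det = ∑ f : κ → ι, (∏ i, M i (f i)) * (N.submatrix f id).det := by
  have hrows : M * N = fun i => ∑ k, M i k • N k := by
    ext i j
    simp [mul_apply]
  classical
  rw [hrows]
  exact (detRowAlternating.toMultilinearMap.map_sum _).trans
    (sum_congr rfl fun f _ => detRowAlternating.toMultilinearMap.map_smul_univ _ _)

/-- The Cauchy–Binet formula. -/
theorem det_mul_eq_sum_strictMono {ι : Type*} [Fintype ι] [LinearOrder ι] {p : ℕ}
    (M : Matrix (Fin p) ι R) (N : Matrix ι (Fin p) R) :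
    (M * N).det = ∑ s : Fin p → ι with StrictMono s,
      (M.submatrix id s).det * (N.submatrix s id).det := by
  have hinj : ∀ f : Fin p → ι, (∏ i, M i (f i)) * (N.submatrix f id).det ≠ 0 → Injective f :=
    fun f hf i j hij => by_contra fun hne => hf (by
      rw [det_zero_of_row_eq hne (by ext; simp [hij]), mul_zero])
  rw [det_mul_eq_sum_prod_mul_det_submatrix, ← sum_filter_of_ne fun f _ => hinj f,
    sum_injective_eq_sum_strictMono_sum_perm]
  refine sum_congr rfl fun s _ => ?_
  have hperm : ∀ σ : Perm (Fin p), (N.submatrix (s ∘ σ) id).det =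
      Perm.sign σ * (N.submatrix s id).det := fun σ => det_permute σ (N.submatrix s id)
  rw [← det_transpose, det_apply, sum_mul]
  refine sum_congr rfl fun σ _ => ?_
  rw [hperm, Units.smul_def, zsmul_eq_mul]
  simp only [transpose_apply, submatrix_apply, id, Function.comp_apply]
  ring

theorem det_eq_zero_of_zero_block {p : ℕ} (A : Matrix (Fin p) (Fin p) R) (k : Fin p)
    (hA : ∀ i j, j ≤ k → k ≤ i → A i j = 0) : A.det = 0 := by
  refine (det_apply A).trans (sum_eq_zero fun σ _ => ?_)
  -- the `k + 1` columns `j ≤ k` cannot all be sent by `σ` into the `k` rows `i < k`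
  obtain ⟨j, hj, hσj⟩ : ∃ j ≤ k, k ≤ σ j := by
    by_contra! h
    have hcard := card_le_card_of_injOn σ (fun j hj => mem_Iio.2 (h j (mem_Iic.1 hj)))
      σ.injective.injOn
    simp only [Fin.card_Iic, Fin.card_Iio] at hcard
    omega
  exact smul_eq_zero_of_right _ (prod_eq_zero (mem_univ j) (hA _ _ hj hσj))

theorem BlockTriangular.det_submatrix_eq_zero {ι : Type*} [LinearOrder ι] {p : ℕ}
    {A : Matrix ι ι R} (hA : A.BlockTriangular id) {r c : Fin p → ι} (hr : Monotone r)
    (hc : Monotone c) {k : Fin p} (hk : c k < r k) : (A.submatrix r c).det = 0 :=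
  det_eq_zero_of_zero_block _ k fun _ _ hj hi => hA ((hc hj).trans_lt (hk.trans_le (hr hi)))

end Matrix

open Matrix

/-- An upper triangular matrix is totally positive upper triangular if every minor on rows
`i₁ < … < i_p` and columns `j₁ < … < j_p` with `i_k ≤ j_k` for all `k` is strictly positive
(these are exactly the minors not identically zero on upper triangular matrices). -/
def IsTotallyPositiveUpper {K : Type*} [Field K] [LinearOrder K] [IsStrictOrderedRing K] {n : ℕ}
    (A : Matrix (Fin n) (Fin n) K) : Prop :=
  (∀ i j : Fin n, j < i → A i j = 0) ∧
  ∀ (p : ℕ) (r c : Fin p → Fin n), StrictMono r → StrictMono c → (∀ k, r k ≤ c k) →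
    0 < (A.submatrix r c).det

namespace IsTotallyPositiveUpper

variable {K : Type*} [Field K] [LinearOrder K] [IsStrictOrderedRing K] {n : ℕ}
  {A : Matrix (Fin n) (Fin n) K}

theorem blockTriangular (hA : IsTotallyPositiveUpper A) : A.BlockTriangular id :=
  fun _ _ => hA.1 _ _

theorem det_submatrix_nonneg (hA : IsTotallyPositiveUpper A) {p : ℕ} {r c : Fin p → Fin n}
    (hr : StrictMono r) (hc : StrictMono c) : 0 ≤ (A.submatrix r c).det := by
  by_cases hrc : ∀ k, r k ≤ c k
  · exact (hA.2 p r c hr hc hrc).le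
  · obtain ⟨k, hk⟩ := not_forall.1 hrc
    exact (hA.blockTriangular.det_submatrix_eq_zero hr.monotone hc.monotone (not_le.1 hk)).ge

end IsTotallyPositiveUpper

/-- The product of two totally positive upper triangular matrices is again totally
positive upper triangular. -/
theorem totallyPositiveUpper_mul {K : Type*} [Field K] [LinearOrder K] [IsStrictOrderedRing K] {n : ℕ}
    (A B : Matrix (Fin n) (Fin n) K)
    (hA : IsTotallyPositiveUpper A) (hB : IsTotallyPositiveUpper B) :
    IsTotallyPositiveUpper (A * B) := by
  have hAB : (A * B).BlockTriangular id := hA.blockTriangular.mul hB.blockTriangular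
  refine ⟨hAB, fun p r c hr hc hrc => ?_⟩
  rw [submatrix_mul A B r id c bijective_id, det_mul_eq_sum_strictMono]
  simp only [submatrix_submatrix, comp_id, id_comp]
  refine sum_pos' (fun s hs => mul_nonneg (hA.det_submatrix_nonneg hr (mem_filter.1 hs).2)
      (hB.det_submatrix_nonneg (mem_filter.1 hs).2 hc)) ⟨r, mem_filter.2 ⟨mem_univ _, hr⟩, ?_⟩
  exact mul_pos (hA.2 p r r hr hr fun _ => le_rfl) (hB.2 p r c hr hc hrc)
end

section
/- Let K be a field, n ≥ 2, and let A be an n×n matrix over K with det A = 1. For indices i, j write A⟨i|j⟩ for the determinant of the (n−1)×(n−1) matrix obtained from A by deleting row i and column j, and for i < i', j < j' write A⟨i,i'|j,j'⟩ for the determinant of the (n−2)×(n−2) matrix obtained by deleting rows i, i' and columns j, j' (interpreted as 1 when n = 2). Then for all 1 ≤ k ≤ n−1 and 1 ≤ l ≤ n−1: A⟨n|k+1⟩ · A⟨l|k⟩ − A⟨n|k⟩ · A⟨l|k+1⟩ = A⟨l,n|k,k+1⟩. -/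
lemma det_row_single' {R : Type*} [CommRing R] {n : ℕ}
    (M : Matrix (Fin (n+1)) (Fin (n+1)) R) (i j : Fin (n+1)) (h : M i = Pi.single j 1) :
    M.det = (-1)^((i:ℕ)+(j:ℕ)) * (M.submatrix i.succAbove j.succAbove).det := by
  rw [Matrix.det_succ_row M i, Finset.sum_eq_single j]
  · rw [h]; simp
  · intro q _ hq; rw [h]; simp [Pi.single_apply, hq]
  · simp

lemma det_two_rows' {R : Type*} [CommRing R] {n : ℕ}
    (M : Matrix (Fin n) (Fin n) R) (i j : Fin n) (hij : i ≠ j)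
    (h : ∀ p, p ≠ i → p ≠ j → M p = Pi.single p 1) :
    M.det = M i i * M j j - M i j * M j i := by
  classical
  rw [Matrix.det_apply]
  have hone : (1 : Equiv.Perm (Fin n)) ≠ Equiv.swap i j := by
    intro hcon
    have := congrArg (fun e => e i) hcon
    simp [Equiv.swap_apply_left] at this
    exact hij this
  rw [← Finset.sum_subset (Finset.subset_univ ({1, Equiv.swap i j} : Finset (Equiv.Perm (Fin n))))]
  · rw [Finset.sum_pair hone]
    have h1 : ∏ p, M ((1 : Equiv.Perm (Fin n)) p) p = M i i * M j j := by
      rw [← Finset.prod_subset (Finset.subset_univ ({i, j} : Finset (Fin n)))]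
      · rw [Finset.prod_pair hij]; simp
      · intro p _ hp
        simp only [Finset.mem_insert, Finset.mem_singleton, not_or] at hp
        simp [h p hp.1 hp.2, Pi.single_apply]
    have h2 : ∏ p, M (Equiv.swap i j p) p = M i j * M j i := by
      rw [← Finset.prod_subset (Finset.subset_univ ({i, j} : Finset (Fin n)))]
      · rw [Finset.prod_pair hij]
        rw [Equiv.swap_apply_left, Equiv.swap_apply_right]
        ring
      · intro p _ hp
        simp only [Finset.mem_insert, Finset.mem_singleton, not_or] at hp
        rw [Equiv.swap_apply_of_ne_of_ne hp.1 hp.2]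
        simp [h p hp.1 hp.2, Pi.single_apply]
    rw [h1, h2, Equiv.Perm.sign_swap hij]
    simp
    ring
  · intro σ _ hσ
    simp only [Finset.mem_insert, Finset.mem_singleton, not_or] at hσ
    have hex : ∃ p, σ p ≠ p ∧ σ p ≠ i ∧ σ p ≠ j := by
      by_contra hcon
      push_neg at hcon
      have hfix : ∀ p, σ p = p ∨ σ p = i ∨ σ p = j := by
        intro p
        by_cases h1 : σ p = p
        · exact Or.inl h1
        by_cases h2 : σ p = i
        · exact Or.inr (Or.inl h2)
        · exact Or.inr (Or.inr (hcon p h1 h2))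
      have hcase : σ = 1 ∨ σ = Equiv.swap i j := by
        have hii : σ i = i ∨ σ i = j := by
          rcases hfix i with hi | hi | hi
          · exact Or.inl hi
          · exact Or.inl hi
          · exact Or.inr hi
        rcases hii with hi | hi
        · -- σ i = i, show σ = 1
          have hj : σ j = j := by
            rcases hfix j with hj | hj | hj
            · exact hj
            · exact absurd (σ.injective (hj.trans hi.symm)) hij.symm
            · exact hj
          left
          apply Equiv.ext
          intro p
          simp only [Equiv.Perm.coe_one, id_eq]
          rcases hfix p with hp | hp | hp
          · exact hp
          · have hpi : p = i := σ.injective (hp.trans hi.symm)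
            rw [hpi]; exact hi
          · have hpj : p = j := σ.injective (hp.trans hj.symm)
            rw [hpj]; exact hj
        · -- σ i = j, show σ = swap i j
          have hj : σ j = i := by
            rcases hfix j with hj | hj | hj
            · exact absurd (σ.injective (hi.trans hj.symm)) hij
            · exact hj
            · exact absurd (σ.injective (hi.trans hj.symm)) hij
          right
          apply Equiv.ext
          intro p
          by_cases hpi : p = i
          · rw [hpi, hi, Equiv.swap_apply_left]
          by_cases hpj : p = j
          · rw [hpj, hj, Equiv.swap_apply_right]
          rw [Equiv.swap_apply_of_ne_of_ne hpi hpj]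
          rcases hfix p with hp | hp | hp
          · exact hp
          · exact absurd (σ.injective (hp.trans hj.symm)) hpj
          · exact absurd (σ.injective (hp.trans hi.symm)) hpi
      rcases hcase with h' | h'
      · exact hσ.1 h'
      · exact hσ.2 h'
    obtain ⟨p, hp1, hp2, hp3⟩ := hex
    have hz : M (σ p) p = 0 := by
      rw [h (σ p) hp2 hp3, Pi.single_apply, if_neg (fun hcon => hp1 hcon.symm)]
    have hprod : (∏ q, M (σ q) q) = 0 :=
      Finset.prod_eq_zero (f := fun q => M (σ q) q) (Finset.mem_univ p) hz
    rw [hprod]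
    simp



set_option maxHeartbeats 1000000 in
/-- Jacobi-type identity between complementary minors of a determinant-one matrix:
`A⟨n|k+1⟩ · A⟨l|k⟩ − A⟨n|k⟩ · A⟨l|k+1⟩ = A⟨l,n|k,k+1⟩`, where `A⟨i|j⟩` is the minor
obtained by deleting row `i` and column `j`, and `A⟨i,i'|j,j'⟩` the minor obtained by
deleting rows `i,i'` and columns `j,j'`. Here the matrix has size `m+2 ≥ 2`, indices are
0-based (so the last row is `m+1`), with `k, l` ranging over `0,…,m`. -/
theorem jacobi_identity_complementary_minors
    {K : Type*} [Field K] {m : ℕ}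
    (A : Matrix (Fin (m + 2)) (Fin (m + 2)) K) (hA : A.det = 1)
    (k l : ℕ) (hk : k < m + 1) (hl : l < m + 1) :
    (A.submatrix (Fin.last (m + 1)).succAbove
        (Fin.succAbove ⟨k + 1, by omega⟩)).det *
      (A.submatrix (Fin.succAbove ⟨l, by omega⟩)
        (Fin.succAbove ⟨k, by omega⟩)).det -
    (A.submatrix (Fin.last (m + 1)).succAbove
        (Fin.succAbove ⟨k, by omega⟩)).det *
      (A.submatrix (Fin.succAbove ⟨l, by omega⟩)
        (Fin.succAbove ⟨k + 1, by omega⟩)).det =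
    (A.submatrix ((Fin.last (m + 1)).succAbove ∘ (⟨l, hl⟩ : Fin (m + 1)).succAbove)
      (((⟨k + 1, by omega⟩ : Fin (m + 2)).succAbove) ∘
        (⟨k, hk⟩ : Fin (m + 1)).succAbove)).det := by
  classical
  set B := A.adjugate with hBdef
  have hBdet : B.det = 1 := by rw [hBdef, Matrix.det_adjugate, hA, one_pow]
  have hAB : A * B = 1 := by rw [hBdef, Matrix.mul_adjugate, hA, one_smul]
  set nn : Fin (m+2) := Fin.last (m+1) with hnn
  set l2 : Fin (m+2) := ⟨l, by omega⟩ with hl2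
  set k2 : Fin (m+2) := ⟨k, by omega⟩ with hk2
  set k12 : Fin (m+2) := ⟨k+1, by omega⟩ with hk12
  have hl2nn : l2 ≠ nn :=
    Fin.ne_of_val_ne (by rw [hl2, hnn]; simp only [Fin.val_last]; omega)
  -- the matrix D: A with rows l2 and nn replaced by unit vectors e_{k2}, e_{k12}
  set D : Matrix (Fin (m+2)) (Fin (m+2)) K := Matrix.of (fun p q =>
    if p = l2 then (Pi.single k2 1 : Fin (m+2) → K) q
    else if p = nn then (Pi.single k12 1 : Fin (m+2) → K) q else A p q) with hD
  -- the matrix C = D * B: identity with rows l2 and nn replaced by rows k2, k12 of B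
  set C : Matrix (Fin (m+2)) (Fin (m+2)) K := Matrix.of (fun p q =>
    if p = l2 then B k2 q else if p = nn then B k12 q else if p = q then (1:K) else 0) with hC
  have hDBC : D * B = C := by
    ext p q
    by_cases h1 : p = l2
    · simp [Matrix.mul_apply, hD, hC, h1, Pi.single_apply, Matrix.of_apply]
    by_cases h2 : p = nn
    · simp [Matrix.mul_apply, hD, hC, h1, h2, Pi.single_apply, Matrix.of_apply]
    · have hone : (A * B) p q = (1 : Matrix (Fin (m+2)) (Fin (m+2)) K) p q := by rw [hAB]
      rw [Matrix.mul_apply] at hone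
      simp only [Matrix.one_apply] at hone
      simp only [Matrix.mul_apply, hD, hC, Matrix.of_apply, if_neg h1, if_neg h2]
      exact hone
  have hrows : ∀ p, p ≠ l2 → p ≠ nn → C p = Pi.single p 1 := by
    intro p hp1 hp2
    funext q
    simp only [hC, Matrix.of_apply, if_neg hp1, if_neg hp2, Pi.single_apply]
    rcases eq_or_ne p q with rfl | hpq
    · simp
    · rw [if_neg hpq, if_neg (Ne.symm hpq)]
  have hCdet : C.det = B k2 l2 * B k12 nn - B k2 nn * B k12 l2 := by
    rw [det_two_rows' C l2 nn hl2nn hrows]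
    simp [hC, Matrix.of_apply, Ne.symm hl2nn]
  have hCD : C.det = D.det := by
    rw [← hDBC, Matrix.det_mul, hBdet, mul_one]
  -- key facts about succAbove
  have hsucck : k12.succAbove ⟨k, hk⟩ = k2 := by
    rw [Fin.succAbove_of_castSucc_lt]
    · rfl
    · rw [hk12]
      simp only [Fin.lt_def, Fin.coe_castSucc]
      omega
  have hsuccl : nn.succAbove ⟨l, hl⟩ = l2 := by
    rw [hnn, Fin.succAbove_last]
    rfl
  have hDrow : D nn = Pi.single k12 1 := by
    funext q
    simp [hD, Matrix.of_apply, Ne.symm hl2nn]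
  set D1 : Matrix (Fin (m+1)) (Fin (m+1)) K := D.submatrix nn.succAbove k12.succAbove with hD1
  have hD1row : D1 ⟨l, hl⟩ = Pi.single (⟨k, hk⟩ : Fin (m+1)) 1 := by
    funext q
    have hstep : D1 ⟨l, hl⟩ q = if k12.succAbove q = k2 then (1:K) else 0 := by
      simp only [hD1, Matrix.submatrix_apply, hsuccl, hD, Matrix.of_apply, if_pos rfl,
        Pi.single_apply, eq_self_iff_true, if_true]
    rw [hstep, ← hsucck]
    simp [Fin.succAbove_right_inj, Pi.single_apply]
  have hD1sub : D1.submatrix (⟨l, hl⟩ : Fin (m+1)).succAbove (⟨k, hk⟩ : Fin (m+1)).succAbove =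
      A.submatrix (nn.succAbove ∘ (⟨l, hl⟩ : Fin (m+1)).succAbove)
        (k12.succAbove ∘ (⟨k, hk⟩ : Fin (m+1)).succAbove) := by
    ext p q
    simp only [hD1, Matrix.submatrix_apply, Function.comp_apply, hD, Matrix.of_apply]
    have h1 : nn.succAbove ((⟨l, hl⟩ : Fin (m+1)).succAbove p) ≠ l2 := by
      rw [← hsuccl]
      exact fun hcon => Fin.succAbove_ne _ p (Fin.succAbove_right_injective hcon)
    have h2 : nn.succAbove ((⟨l, hl⟩ : Fin (m+1)).succAbove p) ≠ nn :=
      Fin.succAbove_ne _ _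
    rw [if_neg h1, if_neg h2]
  -- minors of A in terms of adjugate entries
  have hM : ∀ (i j : Fin (m+2)),
      (A.submatrix j.succAbove i.succAbove).det = (-1 : K)^((j:ℕ)+(i:ℕ)) * B i j := by
    intro i j
    rw [hBdef, Matrix.adjugate_fin_succ_eq_det_submatrix, ← mul_assoc, ← pow_add,
      show (j:ℕ)+(i:ℕ)+((j:ℕ)+(i:ℕ)) = 2*((j:ℕ)+(i:ℕ)) by ring, pow_mul]
    simp
  have par : ∀ a b : ℕ, a % 2 = b % 2 → (-1 : K)^a = (-1 : K)^b := by
    intro a b hab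
    rw [neg_one_pow_eq_pow_mod_two, hab, ← neg_one_pow_eq_pow_mod_two]
  have hvals : (nn:ℕ) = m+1 ∧ (l2:ℕ) = l ∧ (k2:ℕ) = k ∧ (k12:ℕ) = k+1 := by
    refine ⟨?_, rfl, rfl, rfl⟩
    rw [hnn, Fin.val_last]
  obtain ⟨hv1, hv2, hv3, hv4⟩ := hvals
  -- key identity
  have key : B k2 l2 * B k12 nn - B k2 nn * B k12 l2 = ((-1:K)^(m+k) * (-1:K)^(l+k)) *
      (A.submatrix (nn.succAbove ∘ (⟨l, hl⟩ : Fin (m+1)).succAbove)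
        (k12.succAbove ∘ (⟨k, hk⟩ : Fin (m+1)).succAbove)).det := by
    rw [← hCdet, hCD, det_row_single' D nn k12 hDrow, ← hD1,
      det_row_single' D1 ⟨l, hl⟩ ⟨k, hk⟩ hD1row, hD1sub,
      par ((nn:ℕ)+(k12:ℕ)) (m+k) (by rw [hv1, hv4]; omega),
      show ((⟨l, hl⟩ : Fin (m+1)) : ℕ) = l from rfl,
      show ((⟨k, hk⟩ : Fin (m+1)) : ℕ) = k from rfl]
    ring
  have huu : (-1:K)^(m+k) * (-1:K)^(m+k) = 1 := by
    rw [← pow_add, show m+k+(m+k) = 2*(m+k) by ring, pow_mul]; simp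
  have hvv : (-1:K)^(l+k) * (-1:K)^(l+k) = 1 := by
    rw [← pow_add, show l+k+(l+k) = 2*(l+k) by ring, pow_mul]; simp
  -- rewrite the four minors in the goal
  rw [show ((A.submatrix (Fin.last (m + 1)).succAbove
        (Fin.succAbove ⟨k + 1, by omega⟩)).det : K)
      = (A.submatrix nn.succAbove k12.succAbove).det from rfl,
    show ((A.submatrix (Fin.succAbove ⟨l, by omega⟩)
        (Fin.succAbove ⟨k, by omega⟩)).det : K)
      = (A.submatrix l2.succAbove k2.succAbove).det from rfl,
    show ((A.submatrix (Fin.last (m + 1)).succAbove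
        (Fin.succAbove ⟨k, by omega⟩)).det : K)
      = (A.submatrix nn.succAbove k2.succAbove).det from rfl,
    show ((A.submatrix (Fin.succAbove ⟨l, by omega⟩)
        (Fin.succAbove ⟨k + 1, by omega⟩)).det : K)
      = (A.submatrix l2.succAbove k12.succAbove).det from rfl,
    show (A.submatrix ((Fin.last (m + 1)).succAbove ∘ (⟨l, hl⟩ : Fin (m + 1)).succAbove)
      (((⟨k + 1, by omega⟩ : Fin (m + 2)).succAbove) ∘
        (⟨k, hk⟩ : Fin (m + 1)).succAbove)).det
      = (A.submatrix (nn.succAbove ∘ (⟨l, hl⟩ : Fin (m+1)).succAbove)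
        (k12.succAbove ∘ (⟨k, hk⟩ : Fin (m+1)).succAbove)).det from rfl]
  rw [hM k12 nn, hM k2 l2, hM k2 nn, hM k12 l2,
    par ((nn:ℕ)+(k12:ℕ)) (m+k) (by rw [hv1, hv4]; omega),
    par ((l2:ℕ)+(k2:ℕ)) (l+k) (by rw [hv2, hv3]),
    par ((nn:ℕ)+(k2:ℕ)) ((m+k)+1) (by rw [hv1, hv3]; omega),
    par ((l2:ℕ)+(k12:ℕ)) ((l+k)+1) (by rw [hv2, hv4]; omega),
    pow_succ, pow_succ]
  calc ((-1:K)^(m+k) * B k12 nn) * ((-1:K)^(l+k) * B k2 l2) -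
        ((-1:K)^(m+k) * (-1) * B k2 nn) * ((-1:K)^(l+k) * (-1) * B k12 l2)
      = ((-1:K)^(m+k) * (-1:K)^(l+k)) * (B k2 l2 * B k12 nn - B k2 nn * B k12 l2) := by ring
    _ = ((-1:K)^(m+k) * (-1:K)^(l+k)) * (((-1:K)^(m+k) * (-1:K)^(l+k)) * _) := by rw [key]
    _ = ((-1:K)^(m+k) * (-1:K)^(m+k)) * (((-1:K)^(l+k) * (-1:K)^(l+k))) * _ := by ring
    _ = _ := by rw [huu, hvv]; ring
end

section
/- Let K be a field, n ≥ 3, and let u_1, …, u_n, v_1, …, v_n, w_1, …, w_n, be vectors in K^n. For nonnegative integers p, q, r with p + q + r = n, let Θ(p,q,r) denote the determinant of the n×n matrix with columns u_1, …, u_p, v_1, …, v_q, w_1, …, w_r, and let Θ'(p,q,r) denote the determinant of the n×n matrix with columns v_1, …, v_p, w_1, …, w_q, u_1, …, u_r. Let a, b, c ≥ 1 with a + b + c = n and assume that the six determinants Θ(a−1,b,c+1), Θ(a,b+1,c−1), Θ(a+1,b−1,c), Θ'(b−1,c,a+1), Θ'(b,c+1,a−1), Θ'(b+1,c−1,a)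 are nonzero. Then (Θ(a+1,b,c−1)/Θ(a−1,b,c+1)) · (Θ(a,b−1,c+1)/Θ(a,b+1,c−1)) · (Θ(a−1,b+1,c)/Θ(a+1,b−1,c)) = (Θ'(b+1,c,a−1)/Θ'(b−1,c,a+1)) · (Θ'(b,c−1,a+1)/Θ'(b,c+1,a−1)) · (Θ'(b−1,c+1,a)/Θ'(b+1,c−1,a)). (This expresses the identity T_{abc}(E,F,G) = T_{bca}(F,G,E) between triple ratios of flags spanned by the u's, v's, w's.) -/
/-!
Rotating the columns of the matrix defining `Θ'(p,q,r)` by `r` places turns it into the matrix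
defining `Θ(r,p,q)`, so `Θ'(p,q,r) = ε^r Θ(r,p,q)` where `ε = ±1` is the sign of the `n`-cycle.
In each of the three ratios on the right the two values of `r` have the same parity, so the signs
cancel and the ratios are those on the left, in a different order.
-/

/-- `Theta u v w p q` is the determinant of the `n×n` matrix whose columns are
`u 0, …, u (p-1), v 0, …, v (q-1), w 0, …, w (n-p-q-1)` (0-based), i.e. the first `p`
of the `u`'s, then the first `q` of the `v`'s, then the remaining columns from the `w`'s. -/
def Theta {K : Type*} [Field K] {n : ℕ} (u v w : Fin n → Fin n → K) (p q : ℕ) : K :=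
  (Matrix.of fun i j : Fin n =>
    if (j : ℕ) < p then u j i
    else if (j : ℕ) < p + q then
      v ⟨(j : ℕ) - p, Nat.lt_of_le_of_lt (Nat.sub_le _ _) j.isLt⟩ i
    else
      w ⟨(j : ℕ) - p - q,
        Nat.lt_of_le_of_lt (Nat.le_trans (Nat.sub_le _ _) (Nat.sub_le _ _)) j.isLt⟩ i).det

open Equiv

theorem finRotate_pow_apply_val {n : ℕ} [NeZero n] (r : ℕ) (i : Fin n) :
    ((finRotate n ^ r) i : ℕ) = (i + r) % n := by
  induction r with
  | zero => simp [Nat.mod_eq_of_lt i.isLt]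
  | succ r ih =>
    rw [pow_succ', Perm.mul_apply, finRotate_apply, Fin.val_add, ih, Fin.val_one', Nat.add_mod_mod,
      Nat.mod_add_mod, add_assoc]

theorem Theta_rotate {K : Type*} [Field K] {n : ℕ} [NeZero n] (u v w : Fin n → Fin n → K)
    {p q r : ℕ} (h : p + q + r = n) :
    Theta v w u p q = ((-1) ^ (n - 1)) ^ r * Theta u v w r p := by
  have hsign : ((Perm.sign (finRotate n ^ r) : ℤ) : K) = ((-1) ^ (n - 1)) ^ r := by
    simp [sign_finRotate]
  rw [Theta, Theta, ← hsign, ← Matrix.det_permute']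
  congr 1
  ext i j
  have hval := finRotate_pow_apply_val r j
  simp only [Matrix.submatrix_apply, Matrix.of_apply, id]
  by_cases hjp : (j : ℕ) < p
  · have hv : ((finRotate n ^ r) j : ℕ) = j + r := by rw [hval, Nat.mod_eq_of_lt (by omega)]
    rw [if_pos hjp, if_neg (by omega), if_pos (by omega)]
    congr 1; ext; dsimp only; omega
  by_cases hjq : (j : ℕ) < p + q
  · have hv : ((finRotate n ^ r) j : ℕ) = j + r := by rw [hval, Nat.mod_eq_of_lt (by omega)]
    rw [if_neg hjp, if_pos hjq, if_neg (by omega), if_neg (by omega)]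
    congr 1; ext; dsimp only; omega
  · have hv : ((finRotate n ^ r) j : ℕ) = j + r - n := by
      rw [hval, Nat.mod_eq_sub_mod (by omega), Nat.mod_eq_of_lt (by omega)]
    rw [if_neg hjp, if_neg hjq, if_pos (by omega)]
    congr 1; ext; dsimp only; omega

theorem Theta_rotate_div {K : Type*} [Field K] {n : ℕ} [NeZero n] (u v w : Fin n → Fin n → K)
    {p q r p' q' r' : ℕ} (h : p + q + r = n) (h' : p' + q' + r' = n) (hr : r % 2 = r' % 2) :
    Theta v w u p q / Theta v w u p' q' = Theta u v w r p / Theta u v w r' p' := by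
  have hsign : ((-1 : K) ^ (n - 1)) ^ r = ((-1) ^ (n - 1)) ^ r' := by
    rw [pow_right_comm, neg_one_pow_eq_pow_mod_two (n := r), hr, ← neg_one_pow_eq_pow_mod_two,
      pow_right_comm]
  rw [Theta_rotate u v w h, Theta_rotate u v w h', hsign,
    mul_div_mul_left _ _ (pow_ne_zero _ (pow_ne_zero _ (neg_ne_zero.mpr one_ne_zero)))]

theorem tripleRatio_cyclic_invariance_general
    {K : Type*} [Field K] {n : ℕ}
    (u v w : Fin n → Fin n → K)
    (a b c : ℕ) (ha : 1 ≤ a) (hb : 1 ≤ b) (hc : 1 ≤ c) (habc : a + b + c = n) :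
    (Theta u v w (a + 1) b / Theta u v w (a - 1) b) *
      (Theta u v w a (b - 1) / Theta u v w a (b + 1)) *
      (Theta u v w (a - 1) (b + 1) / Theta u v w (a + 1) (b - 1)) =
    (Theta v w u (b + 1) c / Theta v w u (b - 1) c) *
      (Theta v w u b (c - 1) / Theta v w u b (c + 1)) *
      (Theta v w u (b - 1) (c + 1) / Theta v w u (b + 1) (c - 1)) := by
  have : NeZero n := ⟨by omega⟩
  rw [Theta_rotate_div u v w (r := a - 1) (r' := a + 1) (by omega) (by omega) (by omega),
    Theta_rotate_div u v w (r := a + 1) (r' := a - 1) (by omega) (by omega) (by omega),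
    Theta_rotate_div u v w (r := a) (r' := a) (by omega) (by omega) rfl]
  ring

/-- The identity `T_{abc}(E,F,G) = T_{bca}(F,G,E)` between triple ratios, in coordinates:
with `Θ(p,q,r) = Theta u v w p q` and `Θ'(p,q,r) = Theta v w u p q` (so `r = n - p - q`),
assuming the six denominators are nonzero. -/
theorem tripleRatio_cyclic_invariance
    {K : Type*} [Field K] {n : ℕ} (hn : 3 ≤ n)
    (u v w : Fin n → Fin n → K)
    (a b c : ℕ) (ha : 1 ≤ a) (hb : 1 ≤ b) (hc : 1 ≤ c) (habc : a + b + c = n)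
    (h1 : Theta u v w (a - 1) b ≠ 0) (h2 : Theta u v w a (b + 1) ≠ 0)
    (h3 : Theta u v w (a + 1) (b - 1) ≠ 0)
    (h4 : Theta v w u (b - 1) c ≠ 0) (h5 : Theta v w u b (c + 1) ≠ 0)
    (h6 : Theta v w u (b + 1) (c - 1) ≠ 0) :
    (Theta u v w (a + 1) b / Theta u v w (a - 1) b) *
      (Theta u v w a (b - 1) / Theta u v w a (b + 1)) *
      (Theta u v w (a - 1) (b + 1) / Theta u v w (a + 1) (b - 1)) =
    (Theta v w u (b + 1) c / Theta v w u (b - 1) c) *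
      (Theta v w u b (c - 1) / Theta v w u b (c + 1)) *
      (Theta v w u (b - 1) (c + 1) / Theta v w u (b + 1) (c - 1)) :=
  tripleRatio_cyclic_invariance_general u v w a b c ha hb hc habc
end

section
/- Let K be a linearly ordered field and n ≥ 1. Let M and N be n×n matrices over K. Suppose (v_1, …, v_n) and (w_1, …, w_n) are bases of K^n and λ_1 > λ_2 > … > λ_n > 0 and μ_1 > μ_2 > … > μ_n > 0 are scalars in K such that M v_i = λ_i v_i and N w_i = μ_i w_i for all i. If M^k = N^m for some positive integers k and m, then λ_i^k = μ_i^m and span(v_i) = span(w_i) for every i = 1, …, n; in particular, span(v_1, …, v_i) = span(w_1, …, w_i) for every i, i.e., the stable flags of M and N coincide. -/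
/-!
All the statements are about the single matrix `P = M ^ k = N ^ m`. Its eigenvalues `λᵢ ^ k`
on the basis `v` are pairwise distinct, so every eigenvector of `P` is a multiple of some
`v_j`. Each `w_i` is an eigenvector of `P` for `μᵢ ^ m`, so `w_i ∈ K ∙ v_{σ i}` with
`λ_{σ i} ^ k = μᵢ ^ m`. Both families of powers are strictly decreasing, hence `σ` is a strictly
monotone self-map of `Fin n`, i.e. the identity.
-/

open Module Matrix

namespace Module.Basis

variable {ι R V : Type*} [CommRing R] [AddCommGroup V] [Module R V] (b : Basis ι R V)
  {f : End R V} {α : ι → R}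

theorem repr_apply_of_apply_eq_smul (hf : ∀ i, f (b i) = α i • b i) (x : V) (j : ι) :
    b.repr (f x) j = α j * b.repr x j := by
  have key : Finsupp.lapply j ∘ₗ b.repr.toLinearMap ∘ₗ f =
      α j • (Finsupp.lapply j ∘ₗ b.repr.toLinearMap) := b.ext fun i => by
    by_cases hij : i = j
    · subst hij; simp [hf]
    · simp [hf, hij]
  exact LinearMap.congr_fun key x

theorem exists_eq_smul_of_apply_eq_smul [NoZeroDivisors R] (hf : ∀ i, f (b i) = α i • b i)
    (hα : Function.Injective α) {x : V} {c : R} (hx : f x = c • x) (hx0 : x ≠ 0) :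
    ∃ j, α j = c ∧ x = b.repr x j • b j := by
  have hcoord : ∀ j, b.repr x j ≠ 0 → α j = c := fun j hj => by
    have h := b.repr_apply_of_apply_eq_smul hf x j
    rw [hx, map_smul, Finsupp.smul_apply, smul_eq_mul] at h
    exact (mul_right_cancel₀ hj h).symm
  obtain ⟨j, hj⟩ : ∃ j, b.repr x j ≠ 0 := by
    by_contra! h
    exact hx0 (b.repr.map_eq_zero_iff.mp (Finsupp.ext h))
  refine ⟨j, hcoord j hj, b.ext_elem_iff.mpr fun i => ?_⟩
  by_cases hij : i = j
  · subst hij; simp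
  · have hi : b.repr x i = 0 := by
      by_contra hi
      exact hij (hα ((hcoord i hi).trans (hcoord j hj).symm))
    simp [Ne.symm hij, hi]

end Module.Basis

theorem Submodule.span_image_eq_of_span_singleton_eq {R M ι : Type*} [Semiring R]
    [AddCommMonoid M] [Module R M] {v w : ι → M} (h : ∀ i, R ∙ v i = R ∙ w i) (s : Set ι) :
    span R (v '' s) = span R (w '' s) := by
  rw [span_eq_iSup_of_singleton_spans, span_eq_iSup_of_singleton_spans, iSup_image, iSup_image]
  simp only [h]

theorem Matrix.hasEigenvector_toLin' {R n : Type*} [CommRing R] [Fintype n] [DecidableEq n]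
    {A : Matrix n n R} {u : n → R} {c : R} (h : A.mulVec u = c • u) (hu : u ≠ 0) :
    End.HasEigenvector (toLin' A) c u :=
  End.hasEigenvector_iff.mpr ⟨End.mem_eigenspace_iff.mpr h, hu⟩

theorem stable_flags_eq_of_pow_eq_general
    {K : Type*} [Field K] [LinearOrder K] [IsStrictOrderedRing K] {n : ℕ}
    (M N : Matrix (Fin n) (Fin n) K)
    (v w : Fin n → Fin n → K)
    (hv : LinearIndependent K v) (hvspan : Submodule.span K (Set.range v) = ⊤)
    (hw : LinearIndependent K w)
    (lam mu : Fin n → K)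
    (hlam : StrictAnti lam) (hlampos : ∀ i, 0 < lam i)
    (hmu : StrictAnti mu) (hmupos : ∀ i, 0 < mu i)
    (hMv : ∀ i, M.mulVec (v i) = lam i • v i)
    (hNw : ∀ i, N.mulVec (w i) = mu i • w i)
    (k m : ℕ) (hk : 0 < k) (hm : 0 < m)
    (hMN : M ^ k = N ^ m) :
    (∀ i : Fin n, lam i ^ k = mu i ^ m ∧
      Submodule.span K ({v i} : Set (Fin n → K)) =
        Submodule.span K ({w i} : Set (Fin n → K))) ∧
    ∀ i : Fin n,
      Submodule.span K (v '' {j : Fin n | j ≤ i}) =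
        Submodule.span K (w '' {j : Fin n | j ≤ i}) := by
  let b : Basis (Fin n) K (Fin n → K) := .mk hv hvspan.ge
  have hPv : ∀ i, (toLin' M ^ k) (b i) = lam i ^ k • b i := fun i => by
    simpa [b] using (Matrix.hasEigenvector_toLin' (hMv i) (hv.ne_zero i)).pow_apply k
  have hPw : ∀ i, (toLin' M ^ k) (w i) = mu i ^ m • w i := fun i => by
    rw [← toLin'_pow, hMN, toLin'_pow]
    exact (Matrix.hasEigenvector_toLin' (hNw i) (hw.ne_zero i)).pow_apply m
  have hlamk : StrictAnti (lam · ^ k) := fun i j hij =>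
    pow_lt_pow_left₀ (hlam hij) (hlampos j).le hk.ne'
  have hmum : StrictAnti (mu · ^ m) := fun i j hij =>
    pow_lt_pow_left₀ (hmu hij) (hmupos j).le hm.ne'
  choose σ hσ hwσ using fun i =>
    b.exists_eq_smul_of_apply_eq_smul hPv hlamk.injective (hPw i) (hw.ne_zero i)
  have hσ_id : σ = id := StrictMono.eq_id fun i j hij =>
    hlamk.lt_iff_gt.mp (by simpa only [hσ] using hmum hij)
  have hline : ∀ i, K ∙ v i = K ∙ w i := fun i => by
    have hc : b.repr (w i) (σ i) ≠ 0 := fun h0 => hw.ne_zero i (by rw [hwσ i, h0, zero_smul])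
    rw [hwσ i, Submodule.span_singleton_smul_eq hc.isUnit]
    simp [b, hσ_id]
  refine ⟨fun i => ⟨?_, hline i⟩, fun i => Submodule.span_image_eq_of_span_singleton_eq hline _⟩
  simpa [hσ_id] using hσ i

/-- If `M` and `N` are positively hyperbolic matrices (distinct strictly positive
eigenvalues in decreasing order, with eigenbases `v` and `w`) and `M^k = N^m` for some
positive integers `k`, `m`, then the eigenvalues satisfy `λᵢ^k = μᵢ^m`, the eigenlines
coincide, and the stable flags of `M` and `N` coincide. -/
theorem stable_flags_eq_of_pow_eq
    {K : Type*} [Field K] [LinearOrder K] [IsStrictOrderedRing K] {n : ℕ} (hn : 1 ≤ n)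
    (M N : Matrix (Fin n) (Fin n) K)
    (v w : Fin n → Fin n → K)
    (hv : LinearIndependent K v) (hvspan : Submodule.span K (Set.range v) = ⊤)
    (hw : LinearIndependent K w) (hwspan : Submodule.span K (Set.range w) = ⊤)
    (lam mu : Fin n → K)
    (hlam : StrictAnti lam) (hlampos : ∀ i, 0 < lam i)
    (hmu : StrictAnti mu) (hmupos : ∀ i, 0 < mu i)
    (hMv : ∀ i, M.mulVec (v i) = lam i • v i)
    (hNw : ∀ i, N.mulVec (w i) = mu i • w i)
    (k m : ℕ) (hk : 0 < k) (hm : 0 < m)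
    (hMN : M ^ k = N ^ m) :
    (∀ i : Fin n, lam i ^ k = mu i ^ m ∧
      Submodule.span K ({v i} : Set (Fin n → K)) =
        Submodule.span K ({w i} : Set (Fin n → K))) ∧
    ∀ i : Fin n,
      Submodule.span K (v '' {j : Fin n | j ≤ i}) =
        Submodule.span K (w '' {j : Fin n | j ≤ i}) :=
  stable_flags_eq_of_pow_eq_general M N v w hv hvspan hw lam mu hlam hlampos hmu hmupos hMv hNw k m
    hk hm hMN
end
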